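/- arXiv:1810.09669 — 7 statements merged into one kernel-verified Lean document; each statement's English description precedes it below -/
import Mathlib

section
/- Let Ω be a field, K a subfield of Ω, and let M ⊆ Ω and L ⊆ Ω be (possibly infinite) Galois extensions of K such that Gal(M/K) is abelian. Then every element of Gal(ML/L) lies in the center of Gal(ML/K), where ML denotes the compositum of M and L inside Ω. -/
/-!
An automorphism `ρ` of `M ⊔ L` over `K` is determined by its values on `M` and on `L`, and
since `M/K` and `L/K` are normal, `ρ` maps each of them into itself. On `M` the commutator of
`σ` and `τ` is trivial because it is computed in the abelian group `Gal(M/K)`. On `L` both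
`σ τ` and `τ σ` act as `τ`, because `σ` fixes `L` pointwise and `τ` preserves `L`.
-/

namespace IntermediateField

variable {K Ω : Type*} [Field K] [Field Ω] [Algebra K Ω]

theorem algHom_ext_sup {A : Type*} [Semiring A] [Algebra K A] {M L : IntermediateField K Ω}
    ⦃φ₁ φ₂ : ↥(M ⊔ L) →ₐ[K] A⦄
    (hM : ∀ x : M, φ₁ (inclusion le_sup_left x) = φ₂ (inclusion le_sup_left x))
    (hL : ∀ x : L, φ₁ (inclusion le_sup_right x) = φ₂ (inclusion le_sup_right x)) :
    φ₁ = φ₂ :=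
  adjoin_algHom_ext K fun x hx => hx.elim (fun hxM => hM ⟨x, hxM⟩) fun hxL => hL ⟨x, hxL⟩

variable {N E : IntermediateField K Ω} (h : N ≤ E) [Normal K N]

noncomputable def restrictNormalOfLE (ρ : E ≃ₐ[K] E) : N ≃ₐ[K] N :=
  ((E.val.comp ρ.toAlgHom).comp (inclusion h)).restrictNormal' N

theorem coe_restrictNormalOfLE_apply (ρ : E ≃ₐ[K] E) (x : N) :
    (restrictNormalOfLE h ρ x : Ω) = ρ (inclusion h x) :=
  ((E.val.comp ρ.toAlgHom).comp (inclusion h)).restrictNormal_commutes N x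

theorem algEquiv_apply_inclusion (ρ : E ≃ₐ[K] E) (x : N) :
    ρ (inclusion h x) = inclusion h (restrictNormalOfLE h ρ x) :=
  Subtype.ext (coe_restrictNormalOfLE_apply h ρ x).symm

theorem algEquiv_commute_apply_of_fixes {σ : E ≃ₐ[K] E}
    (hσ : ∀ x : N, σ (inclusion h x) = inclusion h x) (τ : E ≃ₐ[K] E) (x : N) :
    σ (τ (inclusion h x)) = τ (σ (inclusion h x)) := by
  rw [hσ, algEquiv_apply_inclusion h τ, hσ]

theorem algEquiv_commute_apply_of_commute (hN : ∀ a b : N ≃ₐ[K] N, a * b = b * a)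
    (σ τ : E ≃ₐ[K] E) (x : N) :
    σ (τ (inclusion h x)) = τ (σ (inclusion h x)) := by
  simp only [algEquiv_apply_inclusion h τ, algEquiv_apply_inclusion h σ]
  rw [← AlgEquiv.mul_apply, hN, AlgEquiv.mul_apply]

end IntermediateField

/-- Let `Ω` be a field, `K` a subfield of `Ω`, and let `M ⊆ Ω` and `L ⊆ Ω` be (possibly infinite)
Galois extensions of `K` such that `Gal(M/K)` is abelian.  Then every element of `Gal(ML/L)`
lies in the center of `Gal(ML/K)`, where `ML` denotes the compositum of `M` and `L` inside `Ω`.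

Here `Gal(ML/L)` is realized as the set of `K`-automorphisms of `M ⊔ L` fixing `L` pointwise. -/
theorem statement2 (K Ω : Type*) [Field K] [Field Ω] [Algebra K Ω]
    (M L : IntermediateField K Ω) [IsGalois K M] [IsGalois K L]
    (habelian : ∀ σ τ : (↥M ≃ₐ[K] ↥M), σ * τ = τ * σ)
    (σ : ↥(M ⊔ L) ≃ₐ[K] ↥(M ⊔ L))
    (hσ : ∀ (x : Ω) (hx : x ∈ L), σ ⟨x, (le_sup_right : L ≤ M ⊔ L) hx⟩ =
      ⟨x, (le_sup_right : L ≤ M ⊔ L) hx⟩) :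
    ∀ τ : ↥(M ⊔ L) ≃ₐ[K] ↥(M ⊔ L), σ * τ = τ * σ := by
  intro τ
  refine AlgEquiv.coe_toAlgHom_injective
    (IntermediateField.algHom_ext_sup (fun x => ?_) fun x => ?_)
  · exact IntermediateField.algEquiv_commute_apply_of_commute le_sup_left habelian σ τ x
  · exact IntermediateField.algEquiv_commute_apply_of_fixes le_sup_right (fun y => hσ y y.2) τ x
end

section
/- Let K be a field and let M₁, M₂ be Galois extensions of K inside a common field Ω, with compositum N = M₁M₂. Let σ ∈ Gal(N/K) be such that the restriction σ|_{M₂} is the identity and the restriction σ|_{M₁} lies in the center of Gal(M₁/K). Then σ lies in the center of Gal(N/K). -/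
/-!
An automorphism of `M₁M₂` is determined by its restrictions to `M₁` and `M₂`, and every
automorphism `τ` of `M₁M₂` restricts to automorphisms `τ₁` of `M₁` and `τ₂` of `M₂` by normality.
Hence `στ = τσ` may be checked on each factor: on `M₁` it reads `σ₁τ₁ = τ₁σ₁`, which is the
centrality of `σ₁`, and on `M₂` both sides equal `τ₂` because `σ` is trivial there.
-/

namespace IntermediateField

variable {K Ω : Type*} [Field K] [Field Ω] [Algebra K Ω]

theorem exists_algEquiv_restrict_of_le {M N : IntermediateField K Ω} [Normal K M] (h : M ≤ N)
    (τ : N →ₐ[K] N) : ∃ τ' : M ≃ₐ[K] M, ∀ x : M, inclusion h (τ' x) = τ (inclusion h x) := by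
  refine ⟨((N.val.comp τ).comp (inclusion h)).restrictNormal' M, fun x => Subtype.ext ?_⟩
  exact AlgHom.restrictNormal_commutes _ M x

theorem sup_algHom_ext {L : Type*} [Semiring L] [Algebra K L] {M₁ M₂ : IntermediateField K Ω}
    {φ ψ : ↥(M₁ ⊔ M₂) →ₐ[K] L}
    (h₁ : ∀ x : M₁, φ (inclusion le_sup_left x) = ψ (inclusion le_sup_left x))
    (h₂ : ∀ x : M₂, φ (inclusion le_sup_right x) = ψ (inclusion le_sup_right x)) :
    φ = ψ :=
  algHom_ext_of_eq_adjoin K (sup_def M₁ M₂) fun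
    | x, .inl hx => h₁ ⟨x, hx⟩
    | x, .inr hx => h₂ ⟨x, hx⟩

end IntermediateField

open IntermediateField

/-- Let `K` be a field and let `M₁, M₂` be Galois extensions of `K` inside a common field `Ω`, with
compositum `N = M₁M₂`.  Let `σ ∈ Gal(N/K)` be such that the restriction `σ|_{M₂}` is the
identity and the restriction `σ|_{M₁}` lies in the center of `Gal(M₁/K)`.  Then `σ` lies in the
center of `Gal(N/K)`.

The restriction of `σ` to `M₁` is encoded by an automorphism `σ₁` of `M₁` agreeing with `σ`
on elements of `M₁` (viewed inside the compositum `N = M₁ ⊔ M₂`). -/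
theorem statement3 (K Ω : Type*) [Field K] [Field Ω] [Algebra K Ω]
    (M₁ M₂ : IntermediateField K Ω) [IsGalois K M₁] [IsGalois K M₂]
    (σ : ↥(M₁ ⊔ M₂) ≃ₐ[K] ↥(M₁ ⊔ M₂))
    (σ₁ : ↥M₁ ≃ₐ[K] ↥M₁)
    (hres : ∀ (x : Ω) (hx : x ∈ M₁),
      (σ ⟨x, (le_sup_left : M₁ ≤ M₁ ⊔ M₂) hx⟩ : Ω) = (σ₁ ⟨x, hx⟩ : Ω))
    (hcenter : ∀ τ₁ : ↥M₁ ≃ₐ[K] ↥M₁, σ₁ * τ₁ = τ₁ * σ₁)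
    (hfix : ∀ (x : Ω) (hx : x ∈ M₂), (σ ⟨x, (le_sup_right : M₂ ≤ M₁ ⊔ M₂) hx⟩ : Ω) = x) :
    ∀ τ : ↥(M₁ ⊔ M₂) ≃ₐ[K] ↥(M₁ ⊔ M₂), σ * τ = τ * σ := by
  intro τ
  have hσ₁ (x : M₁) : σ (inclusion le_sup_left x) = inclusion le_sup_left (σ₁ x) :=
    Subtype.ext (hres x x.2)
  have hσ₂ (x : M₂) : σ (inclusion le_sup_right x) = inclusion le_sup_right x :=
    Subtype.ext (hfix x x.2)
  obtain ⟨τ₁, hτ₁⟩ := exists_algEquiv_restrict_of_le le_sup_left (τ : ↥(M₁ ⊔ M₂) →ₐ[K] _)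
  obtain ⟨τ₂, hτ₂⟩ := exists_algEquiv_restrict_of_le le_sup_right (τ : ↥(M₁ ⊔ M₂) →ₐ[K] _)
  refine AlgEquiv.coe_toAlgHom_injective (sup_algHom_ext (fun x => ?_) (fun x => ?_))
  · have hcomm : σ₁ (τ₁ x) = τ₁ (σ₁ x) := congrArg (· x) (hcenter τ₁)
    simp only [AlgEquiv.coe_toAlgHom, AlgEquiv.mul_apply] at hτ₁ ⊢
    rw [← hτ₁, hσ₁, hcomm, hτ₁, hσ₁]
  · simp only [AlgEquiv.coe_toAlgHom, AlgEquiv.mul_apply] at hτ₂ ⊢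
    rw [hσ₂, ← hτ₂, hσ₂]
end

section
/- Let p be a prime, Ω a field, and K ⊆ M ⊆ N ⊆ Ω a tower of fields such that N/K is a finite Galois extension and [N : M] = p². Let F ⊆ Ω be a finite Galois extension of K with [F : K] < p. Then N ∩ F = M ∩ F. -/
/-!
Put `L = N ∩ F`. The degree `[M L : M]` of the compositum divides `[N : M] = p²`, and it is at
most `[L : K] ≤ [F : K] < p`; hence it is `1`, i.e. `L ⊆ M`.
-/

open IntermediateField Module

theorem Nat.eq_one_of_dvd_prime_pow_of_lt {p k d : ℕ} (hp : p.Prime) (hd : d ∣ p ^ k)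
    (hlt : d < p) : d = 1 := by
  obtain ⟨i, -, rfl⟩ := (Nat.dvd_prime_pow hp).1 hd
  rcases i with _ | i
  · rfl
  · exact absurd hlt (Nat.le_self_pow i.succ_ne_zero p).not_gt

namespace IntermediateField

variable {K Ω : Type*} [Field K] [Field Ω] [Algebra K Ω]

theorem relfinrank_sup_le_finrank (A B : IntermediateField K Ω) [FiniteDimensional K B] :
    A.relfinrank (A ⊔ B) ≤ finrank K B := by
  have hadjoin : extendScalars (le_sup_left : A ≤ A ⊔ B) = adjoin A (B : Set Ω) :=
    restrictScalars_injective K <| by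
      rw [extendScalars_restrictScalars, restrictScalars_adjoin_eq_sup, adjoin_self]
  rw [relfinrank_eq_finrank_of_le le_sup_left, hadjoin]
  exact Cardinal.toNat_le_toNat (adjoin_rank_le_of_isAlgebraic_right A B) (rank_lt_aleph0 K B)

theorem le_of_finrank_lt_of_relfinrank_eq_prime_pow {A B C : IntermediateField K Ω}
    (hAC : A ≤ C) (hBC : B ≤ C) {p k : ℕ} (hp : p.Prime) (hAC_rank : A.relfinrank C = p ^ k)
    [FiniteDimensional K B] (hB : finrank K B < p) : B ≤ A := by
  have hdvd : A.relfinrank (A ⊔ B) ∣ p ^ k :=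
    hAC_rank ▸ Dvd.intro _ (relfinrank_mul_relfinrank le_sup_left (sup_le hAC hBC))
  have hone : A.relfinrank (A ⊔ B) = 1 :=
    Nat.eq_one_of_dvd_prime_pow_of_lt hp hdvd ((relfinrank_sup_le_finrank A B).trans_lt hB)
  exact le_sup_right.trans (relfinrank_eq_one_iff.1 hone)

end IntermediateField

theorem statement4_general (p : ℕ) (hp : p.Prime) (K Ω : Type*) [Field K] [Field Ω] [Algebra K Ω]
    (M N F : IntermediateField K Ω) (hMN : M ≤ N)
    (hdeg : Module.finrank ↥M ↥(IntermediateField.extendScalars hMN) = p ^ 2)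
    [FiniteDimensional K F]
    (hF : Module.finrank K F < p) :
    N ⊓ F = M ⊓ F := by
  refine le_antisymm (le_inf ?_ inf_le_right) (inf_le_inf_right F hMN)
  exact le_of_finrank_lt_of_relfinrank_eq_prime_pow hMN inf_le_left hp
    (by rw [relfinrank_eq_finrank_of_le hMN, hdeg])
    ((finrank_le_of_le_right inf_le_right).trans_lt hF)

/-- Let `p` be a prime, `Ω` a field, and `K ⊆ M ⊆ N ⊆ Ω` a tower of fields such that `N/K` is a
finite Galois extension and `[N : M] = p²`.  Let `F ⊆ Ω` be a finite Galois extension of `K`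
with `[F : K] < p`.  Then `N ∩ F = M ∩ F`. -/
theorem statement4 (p : ℕ) (hp : p.Prime) (K Ω : Type*) [Field K] [Field Ω] [Algebra K Ω]
    (M N F : IntermediateField K Ω) (hMN : M ≤ N)
    [IsGalois K N] [FiniteDimensional K N]
    (hdeg : Module.finrank ↥M ↥(IntermediateField.extendScalars hMN) = p ^ 2)
    [IsGalois K F] [FiniteDimensional K F]
    (hF : Module.finrank K F < p) :
    N ⊓ F = M ⊓ F :=
  statement4_general p hp K Ω M N F hMN hdeg hF
end

section
/- Let p be a prime, q = p², and let K be a finite extension of ℚ_p inside a fixed algebraic closure of ℚ_p, with valuation ring O, maximal ideal P, and ramification index e over ℚ_p. Let m ≥ 1 be an integer with q·m ≥ e, and let σ be a ℚ_p-algebra automorphism of K such that σ(x) − x ∈ P^m for all x ∈ O. Then for every α ∈ K one has |σ(α)^q − α^q|_p ≤ p⁻¹ · max(1, |σ(α)|_p)^q · max(1, |α|_p)^q. -/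
open IntermediateField

/-- The unique extension of the `p`-adic absolute value to the algebraic closure of `ℚ_p`
(normalized by `|p|_p = p⁻¹`), given on `α` by `‖N_{ℚ_p(α)/ℚ_p}(α)‖ ^ (1/[ℚ_p(α):ℚ_p])`. -/
noncomputable def padicAbs (p : ℕ) [Fact p.Prime] (α : AlgebraicClosure ℚ_[p]) : ℝ :=
  ‖Algebra.norm ℚ_[p] (AdjoinSimple.gen ℚ_[p] α)‖ ^
    ((Module.finrank ℚ_[p] ℚ_[p]⟮α⟯ : ℝ)⁻¹)

/-- `e` is the ramification index over `ℚ_p` of a finite extension `K` of `ℚ_p` (inside a fixed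
algebraic closure of `ℚ_p`): equivalently, the value group of the `p`-adic absolute value on
`K \ {0}` is exactly `p^{ℤ/e}`.  With this normalization, for `x` in the valuation ring `O` of
`K` and `m ∈ ℕ`, membership `x ∈ P^m` in the `m`-th power of the maximal ideal `P` of `O` is
equivalent to `|x|_p ≤ p^{-m/e}`. -/
def IsRamificationIdx (p : ℕ) [Fact p.Prime]
    (K : IntermediateField ℚ_[p] (AlgebraicClosure ℚ_[p])) (e : ℕ) : Prop :=
  0 < e ∧
  (∀ x ∈ K, x ≠ 0 → ∃ m : ℤ, padicAbs p x = (p : ℝ) ^ (-(m : ℝ) / (e : ℝ))) ∧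
  (∀ m : ℤ, ∃ x ∈ K, x ≠ 0 ∧ padicAbs p x = (p : ℝ) ^ (-(m : ℝ) / (e : ℝ)))

/-! The `p`-adic absolute value on `AlgebraicClosure ℚ_[p]` is the spectral norm: a
multiplicative ultrametric norm which depends only on minimal polynomials, hence is preserved
by `σ`. If `|α| ≤ 1`, write `σ α = α + t` with `|t| ≤ p^{-m/e}`; in the binomial expansion
of `(α + t)^q - α^q` every mixed term has a coefficient divisible by `p`, and
`|t^q| ≤ p^{-qm/e} ≤ p⁻¹`. If `|α| > 1`, apply this to `α⁻¹`. -/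

theorem norm_algebraNorm_gen_eq_norm_coeff_zero_minpoly {F L : Type*} [NormedField F] [Field L]
    [Algebra F L] {x : L} (hx : IsIntegral F x) :
    ‖Algebra.norm F (AdjoinSimple.gen F x)‖ = ‖(minpoly F x).coeff 0‖ := by
  have h := Algebra.PowerBasis.norm_gen_eq_coeff_zero_minpoly (adjoin.powerBasis hx)
  rw [adjoin.powerBasis_gen, minpoly_gen] at h
  rw [h, norm_mul, norm_pow, norm_neg, norm_one, one_pow, one_mul]

theorem padicAbs_eq_norm {p : ℕ} [Fact p.Prime] (x : PadicAlgCl p) : padicAbs p x = ‖x‖ := by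
  have hx : IsIntegral ℚ_[p] x := Algebra.IsIntegral.isIntegral x
  rw [padicAbs, norm_algebraNorm_gen_eq_norm_coeff_zero_minpoly hx, adjoin.finrank hx,
    ← PadicAlgCl.spectralNorm_eq, spectralNorm.spectralNorm_eq_norm_coeff_zero_rpow, one_div]

theorem PadicAlgCl.norm_natCast_self {p : ℕ} [Fact p.Prime] :
    ‖(p : PadicAlgCl p)‖ = (p : ℝ)⁻¹ := by
  rw [← map_natCast (algebraMap ℚ_[p] (PadicAlgCl p)), norm_algebraMap', Padic.norm_p]

theorem spectralNorm_algEquiv_apply {K L : Type*} [NontriviallyNormedField K] [Field L]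
    [Algebra K L] {E : IntermediateField K L} (σ : E ≃ₐ[K] E) (x : E) :
    spectralNorm K L (σ x) = spectralNorm K L x := by
  rw [spectralNorm, spectralNorm]
  congr 1
  exact (minpoly.algHom_eq E.val E.val.injective (σ x)).trans
    ((minpoly.algEquiv_eq σ x).trans (minpoly.algHom_eq E.val E.val.injective x).symm)

section Ultrametric

variable {R : Type*} [SeminormedCommRing R] [NormOneClass R] [IsUltrametricDist R]

theorem norm_add_pow_prime_pow_sub_le {p : ℕ} (hp : p.Prime) (n : ℕ) {x y : R}
    (hx : ‖x‖ ≤ 1) (hy : ‖y‖ ≤ 1) :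
    ‖(x + y) ^ p ^ n - x ^ p ^ n - y ^ p ^ n‖ ≤ ‖(p : R)‖ := by
  rw [add_pow_prime_pow_eq' hp, add_assoc, add_sub_cancel_left, add_sub_cancel_left]
  refine (norm_mul_le _ _).trans (mul_le_of_le_one_right (norm_nonneg _) ?_)
  refine IsUltrametricDist.norm_sum_le_of_forall_le_of_nonneg zero_le_one fun k _ => ?_
  refine (norm_mul_le _ _).trans (mul_le_one₀ ((norm_mul_le _ _).trans ?_) (norm_nonneg _)
    (IsUltrametricDist.norm_natCast_le_one R _))
  exact mul_le_one₀ ((norm_pow_le _ _).trans (pow_le_one₀ (norm_nonneg _) hx)) (norm_nonneg _)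
    ((norm_pow_le _ _).trans (pow_le_one₀ (norm_nonneg _) hy))

theorem norm_pow_prime_pow_sub_pow_le {p : ℕ} (hp : p.Prime) (n : ℕ) {x y : R}
    (hx : ‖x‖ ≤ 1) (hy : ‖y‖ ≤ 1) (hxy : ‖y - x‖ ^ p ^ n ≤ ‖(p : R)‖) :
    ‖y ^ p ^ n - x ^ p ^ n‖ ≤ ‖(p : R)‖ := by
  have hyx : ‖y - x‖ ≤ 1 := sub_eq_add_neg y x ▸
    (IsUltrametricDist.norm_add_le_max y (-x)).trans (max_le hy ((norm_neg x).trans_le hx))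
  have hmixed := norm_add_pow_prime_pow_sub_le hp n hx hyx
  rw [add_sub_cancel] at hmixed
  calc ‖y ^ p ^ n - x ^ p ^ n‖
      = ‖(y ^ p ^ n - x ^ p ^ n - (y - x) ^ p ^ n) + (y - x) ^ p ^ n‖ := by rw [sub_add_cancel]
    _ ≤ max ‖y ^ p ^ n - x ^ p ^ n - (y - x) ^ p ^ n‖ ‖(y - x) ^ p ^ n‖ :=
        IsUltrametricDist.norm_add_le_max _ _
    _ ≤ ‖(p : R)‖ := max_le hmixed ((norm_pow_le _ _).trans hxy)

end Ultrametric

theorem norm_pow_sub_pow_eq {F : Type*} [NormedField F] {x y : F} (hx : x ≠ 0) (hy : y ≠ 0)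
    (n : ℕ) : ‖y ^ n - x ^ n‖ = ‖y‖ ^ n * ‖x‖ ^ n * ‖y⁻¹ ^ n - x⁻¹ ^ n‖ := by
  rw [← norm_pow, ← norm_pow, ← norm_mul, ← norm_mul, inv_pow, inv_pow, mul_sub,
    mul_inv_cancel_right₀ (pow_ne_zero n hx), mul_comm (y ^ n),
    mul_inv_cancel_right₀ (pow_ne_zero n hy), norm_sub_rev]

theorem rpow_neg_div_pow_le_inv {b : ℝ} (hb : 1 ≤ b) {e m N : ℕ} (he : 0 < e)
    (h : e ≤ N * m) : (b ^ (-(m : ℝ) / e)) ^ N ≤ b⁻¹ := by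
  rw [← Real.rpow_natCast, ← Real.rpow_mul (zero_le_one.trans hb), ← Real.rpow_neg_one]
  refine Real.rpow_le_rpow_of_exponent_le hb ?_
  have he' : (0 : ℝ) < e := by exact_mod_cast he
  have h' : (e : ℝ) ≤ N * m := by exact_mod_cast h
  rw [div_mul_eq_mul_div, div_le_iff₀ he']
  linarith

theorem statement6_general (p : ℕ) [Fact p.Prime]
    (K : IntermediateField ℚ_[p] (AlgebraicClosure ℚ_[p]))
    (e : ℕ) (he : IsRamificationIdx p K e)
    (m : ℕ) (hqm : e ≤ p ^ 2 * m)
    (σ : ↥K ≃ₐ[ℚ_[p]] ↥K)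
    (hσ : ∀ x : ↥K, padicAbs p (x : AlgebraicClosure ℚ_[p]) ≤ 1 →
      padicAbs p ((σ x : AlgebraicClosure ℚ_[p]) - (x : AlgebraicClosure ℚ_[p])) ≤
        (p : ℝ) ^ (-(m : ℝ) / (e : ℝ)))
    (α : ↥K) :
    padicAbs p ((σ α : AlgebraicClosure ℚ_[p]) ^ (p ^ 2) -
        (α : AlgebraicClosure ℚ_[p]) ^ (p ^ 2)) ≤
      (p : ℝ)⁻¹ * max 1 (padicAbs p (σ α : AlgebraicClosure ℚ_[p])) ^ (p ^ 2) *
        max 1 (padicAbs p (α : AlgebraicClosure ℚ_[p])) ^ (p ^ 2) := by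
  have hp : p.Prime := Fact.out
  simp only [padicAbs_eq_norm] at hσ ⊢
  have hσ_norm (x : K) : ‖(σ x : PadicAlgCl p)‖ = ‖(x : PadicAlgCl p)‖ :=
    spectralNorm_algEquiv_apply σ x
  have hσ_pow (x : K) (hx : ‖(x : PadicAlgCl p)‖ ≤ 1) :
      ‖(σ x : PadicAlgCl p) ^ p ^ 2 - (x : PadicAlgCl p) ^ p ^ 2‖ ≤ (p : ℝ)⁻¹ := by
    rw [← PadicAlgCl.norm_natCast_self]
    refine norm_pow_prime_pow_sub_pow_le hp 2 hx ((hσ_norm x).trans_le hx) ?_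
    rw [PadicAlgCl.norm_natCast_self]
    exact (pow_le_pow_left₀ (norm_nonneg _) (hσ x hx) _).trans
      (rpow_neg_div_pow_le_inv (Nat.one_le_cast.2 hp.one_lt.le) he.1 hqm)
  rw [hσ_norm]
  rcases le_or_gt ‖(α : PadicAlgCl p)‖ 1 with hα | hα
  · simpa [max_eq_left hα] using hσ_pow α hα
  have hα₀ : (α : PadicAlgCl p) ≠ 0 := norm_pos_iff.1 (zero_lt_one.trans hα)
  have hσα₀ : (σ α : PadicAlgCl p) ≠ 0 :=
    norm_pos_iff.1 ((hσ_norm α).symm ▸ zero_lt_one.trans hα)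
  have hinv := hσ_pow α⁻¹ (by simpa using inv_le_one_of_one_le₀ hα.le)
  simp only [map_inv₀, IntermediateField.coe_inv] at hinv
  calc _ = ‖(α : PadicAlgCl p)‖ ^ p ^ 2 * ‖(α : PadicAlgCl p)‖ ^ p ^ 2 *
        ‖(σ α : PadicAlgCl p)⁻¹ ^ p ^ 2 - (α : PadicAlgCl p)⁻¹ ^ p ^ 2‖ := by
        rw [norm_pow_sub_pow_eq hα₀ hσα₀, hσ_norm]
    _ ≤ ‖(α : PadicAlgCl p)‖ ^ p ^ 2 * ‖(α : PadicAlgCl p)‖ ^ p ^ 2 * (p : ℝ)⁻¹ := by gcongr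
    _ = _ := by rw [max_eq_right hα.le]; ring

/-- Let `p` be a prime, `q = p²`, and let `K` be a finite extension of `ℚ_p` inside a fixed
algebraic closure of `ℚ_p`, with valuation ring `O`, maximal ideal `P`, and ramification
index `e` over `ℚ_p`.  Let `m ≥ 1` be an integer with `q·m ≥ e`, and let `σ` be a
`ℚ_p`-algebra automorphism of `K` such that `σ(x) − x ∈ P^m` for all `x ∈ O`.  Then for every
`α ∈ K` one has `|σ(α)^q − α^q|_p ≤ p⁻¹ · max(1, |σ(α)|_p)^q · max(1, |α|_p)^q`.

Membership `σ(x) − x ∈ P^m` is expressed by `|σ(x) − x|_p ≤ p^{-m/e}`. -/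
theorem statement6 (p : ℕ) [Fact p.Prime]
    (K : IntermediateField ℚ_[p] (AlgebraicClosure ℚ_[p])) [FiniteDimensional ℚ_[p] ↥K]
    (e : ℕ) (he : IsRamificationIdx p K e)
    (m : ℕ) (hm : 1 ≤ m) (hqm : e ≤ p ^ 2 * m)
    (σ : ↥K ≃ₐ[ℚ_[p]] ↥K)
    (hσ : ∀ x : ↥K, padicAbs p (x : AlgebraicClosure ℚ_[p]) ≤ 1 →
      padicAbs p ((σ x : AlgebraicClosure ℚ_[p]) - (x : AlgebraicClosure ℚ_[p])) ≤
        (p : ℝ) ^ (-(m : ℝ) / (e : ℝ)))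
    (α : ↥K) :
    padicAbs p ((σ α : AlgebraicClosure ℚ_[p]) ^ (p ^ 2) -
        (α : AlgebraicClosure ℚ_[p]) ^ (p ^ 2)) ≤
      (p : ℝ)⁻¹ * max 1 (padicAbs p (σ α : AlgebraicClosure ℚ_[p])) ^ (p ^ 2) *
        max 1 (padicAbs p (α : AlgebraicClosure ℚ_[p])) ^ (p ^ 2) :=
  statement6_general p K e he m hqm σ hσ α
end

section
/- Let K be a field equipped with a nonarchimedean absolute value |·|, let σ be a field automorphism of K with |σ(x)| = |x| for all x ∈ K, let Q ≥ 1 be an integer and 0 < c ≤ 1 a real number. Suppose that |σ(α) − α^Q| ≤ c for every α ∈ K with |α| ≤ 1. Then for every nonzero α ∈ K one has |σ(α) − α^Q| ≤ c · max(1, |σ(α)|) · max(1, |α|)^Q. -/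
/-!
For `|α| ≤ 1` the bound is the hypothesis itself. For `|α| > 1` apply the hypothesis to `α⁻¹`:
factoring `σ(α) α^Q` out of `σ(α) − α^Q` leaves `−(σ(α⁻¹) − α⁻¹^Q)`, so the defect at `α` is
`|σ(α)| |α|^Q` times the defect at `α⁻¹`, and both factors are the maxima in the bound.
-/

theorem map_sub_pow_eq_mul_map_inv_sub {K F : Type*} [Field K] [FunLike F K K]
    [RingHomClass F K K] (σ : F) {α : K} (hα : α ≠ 0) (Q : ℕ) :
    σ α - α ^ Q = -(σ α * α ^ Q) * (σ α⁻¹ - α⁻¹ ^ Q) := by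
  have hσα : σ α ≠ 0 := (map_ne_zero σ).mpr hα
  rw [map_inv₀, inv_pow]
  field_simp
  ring

theorem AbsoluteValue.map_sub_pow_eq_mul_map_inv_sub {K F : Type*} [Field K] [FunLike F K K]
    [RingHomClass F K K] (v : AbsoluteValue K ℝ) (σ : F) {α : K} (hα : α ≠ 0) (Q : ℕ) :
    v (σ α - α ^ Q) = v (σ α) * v α ^ Q * v (σ α⁻¹ - α⁻¹ ^ Q) := by
  rw [_root_.map_sub_pow_eq_mul_map_inv_sub σ hα, map_mul, v.map_neg, map_mul, map_pow]

theorem statement7_general (K : Type*) [Field K] (v : AbsoluteValue K ℝ)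
    (σ : K ≃+* K) (hσ : ∀ x : K, v (σ x) = v x)
    (Q : ℕ) (c : ℝ)
    (h : ∀ α : K, v α ≤ 1 → v (σ α - α ^ Q) ≤ c) :
    ∀ α : K, α ≠ 0 → v (σ α - α ^ Q) ≤ c * max 1 (v (σ α)) * max 1 (v α) ^ Q := by
  intro α hα
  have hc : 0 ≤ c := (v.nonneg _).trans (h 0 (by simp))
  rcases le_or_gt (v α) 1 with hle | hgt
  · calc v (σ α - α ^ Q) ≤ c * 1 * 1 := by simpa using h α hle
      _ ≤ c * max 1 (v (σ α)) * max 1 (v α) ^ Q := by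
        gcongr
        · exact le_max_left _ _
        · exact one_le_pow₀ (le_max_left _ _)
  · have hinv : v α⁻¹ ≤ 1 := by
      rw [map_inv₀]
      exact inv_le_one_of_one_le₀ hgt.le
    rw [max_eq_right ((hσ α).symm ▸ hgt.le), max_eq_right hgt.le,
      v.map_sub_pow_eq_mul_map_inv_sub σ hα]
    calc v (σ α) * v α ^ Q * v (σ α⁻¹ - α⁻¹ ^ Q) ≤ v (σ α) * v α ^ Q * c := by
          gcongr
          exact h _ hinv
      _ = c * v (σ α) * v α ^ Q := by ring

/-- Let `K` be a field equipped with a nonarchimedean absolute value `|·|`, let `σ` be a field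
automorphism of `K` with `|σ(x)| = |x|` for all `x ∈ K`, let `Q ≥ 1` be an integer and
`0 < c ≤ 1` a real number.  Suppose that `|σ(α) − α^Q| ≤ c` for every `α ∈ K` with `|α| ≤ 1`.
Then for every nonzero `α ∈ K` one has
`|σ(α) − α^Q| ≤ c · max(1, |σ(α)|) · max(1, |α|)^Q`. -/
theorem statement7 (K : Type*) [Field K] (v : AbsoluteValue K ℝ)
    (hna : ∀ x y : K, v (x + y) ≤ max (v x) (v y))
    (σ : K ≃+* K) (hσ : ∀ x : K, v (σ x) = v x)
    (Q : ℕ) (hQ : 1 ≤ Q) (c : ℝ) (hc0 : 0 < c) (hc1 : c ≤ 1)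
    (h : ∀ α : K, v α ≤ 1 → v (σ α - α ^ Q) ≤ c) :
    ∀ α : K, α ≠ 0 → v (σ α - α ^ Q) ≤ c * max 1 (v (σ α)) * max 1 (v α) ^ Q :=
  statement7_general K v σ hσ Q c h
end

section
/- Let p be an odd prime and let V = {A ∈ M₂(𝔽_p) : tr(A) = 0} be the 𝔽_p-vector space of trace-zero 2×2 matrices over 𝔽_p. If U ⊆ V is an 𝔽_p-linear subspace such that S·A·S⁻¹ ∈ U for every A ∈ U and every S ∈ SL₂(𝔽_p), then U = {0} or U = V. -/
/-!
Write `E`, `F`, `H` for the standard basis `!![0, 1; 0, 0]`, `!![0, 0; 1, 0]`,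
`!![1, 0; 0, -1]` of the trace-zero matrices. When `2 ≠ 0`, a nonzero trace-zero matrix is not
scalar, so some `SL₂`-conjugate `A ∈ U` of it has a nonzero lower-left entry `c`. Adding the
conjugates of `A` by `!![1, ±1; 0, 1]` and subtracting `2A` leaves `-2c • E`, so `E ∈ U`; the
Weyl element `!![0, -1; 1, 0]` turns `E` into `-F`, and conjugating `F` by `!![1, 1; 0, 1]`
gives `H - E + F`.
-/

open Matrix
open scoped MatrixGroups

namespace Matrix

variable {K : Type*}

section CommRing

variable [CommRing K]

def SpecialLinearGroup.ofEntries (a b c d : K) (h : a * d - b * c = 1) : SL(2, K) :=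
  ⟨!![a, b; c, d], by rwa [det_fin_two_of]⟩

@[simp]
lemma SpecialLinearGroup.coe_ofEntries (a b c d : K) (h : a * d - b * c = 1) :
    (SpecialLinearGroup.ofEntries a b c d h : Matrix (Fin 2) (Fin 2) K) = !![a, b; c, d] :=
  rfl

@[simp]
lemma SpecialLinearGroup.coe_inv_ofEntries (a b c d : K) (h : a * d - b * c = 1) :
    ((SpecialLinearGroup.ofEntries a b c d h)⁻¹ : SL(2, K)) = !![d, -b; -c, a] := by
  rw [SpecialLinearGroup.coe_inv, coe_ofEntries, adjugate_fin_two_of]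

lemma eq_scalar_of_forall_conj_apply_one_zero_eq_zero (A : Matrix (Fin 2) (Fin 2) K)
    (h : ∀ S : SL(2, K),
      ((S : Matrix (Fin 2) (Fin 2) K) * A * ((S⁻¹ : SL(2, K)) : Matrix (Fin 2) (Fin 2) K)) 1 0
        = 0) :
    A = scalar (Fin 2) (A 0 0) := by
  obtain ⟨a, b, c, d, rfl⟩ : ∃ a b c d : K, A = !![a, b; c, d] :=
    ⟨_, _, _, _, eta_fin_two A⟩
  have hc : c = 0 := by simpa using h 1
  have hb : b = 0 := by simpa using h (SpecialLinearGroup.ofEntries 0 (-1) 1 0 (by ring))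
  have hd : a + c - d - b = 0 := by
    simpa [sub_eq_add_neg, add_assoc] using h (SpecialLinearGroup.ofEntries 1 0 1 1 (by ring))
  subst hc hb
  obtain rfl : d = a := by linear_combination -hd
  ext i j
  fin_cases i <;> fin_cases j <;> rfl

end CommRing

lemma exists_conj_apply_one_zero_ne_zero [Field K] (h2 : (2 : K) ≠ 0)
    {A : Matrix (Fin 2) (Fin 2) K} (htr : A.trace = 0) (hA : A ≠ 0) :
    ∃ S : SL(2, K),
      ((S : Matrix (Fin 2) (Fin 2) K) * A * ((S⁻¹ : SL(2, K)) : Matrix (Fin 2) (Fin 2) K)) 1 0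
        ≠ 0 := by
  by_contra! h
  rw [eq_scalar_of_forall_conj_apply_one_zero_eq_zero A h] at htr hA
  simp only [scalar_apply, trace_diagonal, Finset.sum_const, Finset.card_univ, Fintype.card_fin,
    nsmul_eq_mul, Nat.cast_ofNat, mul_eq_zero, h2, false_or] at htr
  simp [htr] at hA

end Matrix

namespace Submodule

variable {K : Type*} [Field K]

def IsConjInvariantSL2 (U : Submodule K (Matrix (Fin 2) (Fin 2) K)) : Prop :=
  ∀ A ∈ U, ∀ S : SL(2, K),
    (S : Matrix (Fin 2) (Fin 2) K) * A * ((S⁻¹ : SL(2, K)) : Matrix (Fin 2) (Fin 2) K) ∈ U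

namespace IsConjInvariantSL2

variable {U : Submodule K (Matrix (Fin 2) (Fin 2) K)} {A : Matrix (Fin 2) (Fin 2) K}

lemma conj_mem (hU : U.IsConjInvariantSL2) (hA : A ∈ U) {a b c d : K}
    (h : a * d - b * c = 1) :
    !![a, b; c, d] * A * !![d, -b; -c, a] ∈ U := by
  simpa using hU A hA (SpecialLinearGroup.ofEntries a b c d h)

lemma upper_mem_of_apply_one_zero_ne_zero (hU : U.IsConjInvariantSL2) (h2 : (2 : K) ≠ 0)
    (hA : A ∈ U) (hc : A 1 0 ≠ 0) :
    !![0, 1; 0, 0] ∈ U := by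
  have hplus := hU.conj_mem hA (a := 1) (b := 1) (c := 0) (d := 1) (by ring)
  have hminus := hU.conj_mem hA (a := 1) (b := -1) (c := 0) (d := 1) (by ring)
  simp only [neg_zero, neg_neg] at hplus hminus
  have key : !![1, 1; 0, 1] * A * !![1, -1; 0, 1] + !![1, -1; 0, 1] * A * !![1, 1; 0, 1]
      - (2 : K) • A = (-(2 * A 1 0)) • !![0, 1; 0, 0] := by
    rw [eta_fin_two A]
    ext i j
    fin_cases i <;> fin_cases j <;> simp <;> ring
  rw [← U.smul_mem_iff (by simp [h2, hc] : -(2 * A 1 0) ≠ 0), ← key]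
  exact U.sub_mem (U.add_mem hplus hminus) (U.smul_mem _ hA)

lemma lower_mem_of_upper_mem (hU : U.IsConjInvariantSL2) (hE : !![0, 1; 0, 0] ∈ U) :
    !![0, 0; 1, 0] ∈ U := by
  have hconj := hU.conj_mem hE (a := 0) (b := -1) (c := 1) (d := 0) (by ring)
  rw [neg_neg] at hconj
  have key : !![0, -1; 1, 0] * !![0, 1; 0, 0] * !![0, 1; -1, 0]
      = -!![(0 : K), 0; 1, 0] := by
    ext i j
    fin_cases i <;> fin_cases j <;> simp
  rwa [key, neg_mem_iff] at hconj

lemma diag_mem_of_upper_mem (hU : U.IsConjInvariantSL2) (hE : !![0, 1; 0, 0] ∈ U) :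
    !![1, 0; 0, -1] ∈ U := by
  have hF := hU.lower_mem_of_upper_mem hE
  have hconj := hU.conj_mem hF (a := 1) (b := 1) (c := 0) (d := 1) (by ring)
  rw [neg_zero] at hconj
  have key : !![1, 1; 0, 1] * !![0, 0; 1, 0] * !![1, -1; 0, 1]
      = !![(1 : K), 0; 0, -1] - !![0, 1; 0, 0] + !![0, 0; 1, 0] := by
    ext i j
    fin_cases i <;> fin_cases j <;> simp
  rw [key] at hconj
  convert U.sub_mem (U.add_mem hconj hE) hF using 1
  abel

lemma mem_of_trace_eq_zero (hE : !![0, 1; 0, 0] ∈ U) (hF : !![0, 0; 1, 0] ∈ U)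
    (hH : !![1, 0; 0, -1] ∈ U) {B : Matrix (Fin 2) (Fin 2) K} (hB : B.trace = 0) : B ∈ U := by
  have hB11 : B 1 1 = -B 0 0 := by
    rw [trace_fin_two] at hB
    linear_combination hB
  have hdecomp :
      B = B 0 0 • !![1, 0; 0, -1] + B 0 1 • !![0, 1; 0, 0] + B 1 0 • !![0, 0; 1, 0] := by
    ext i j
    fin_cases i <;> fin_cases j <;> simp [hB11]
  rw [hdecomp]
  exact U.add_mem (U.add_mem (U.smul_mem _ hH) (U.smul_mem _ hE)) (U.smul_mem _ hF)

lemma ker_trace_le (hU : U.IsConjInvariantSL2) (h2 : (2 : K) ≠ 0) (hA : A ∈ U)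
    (htr : A.trace = 0) (hA0 : A ≠ 0) :
    LinearMap.ker (traceLinearMap (Fin 2) K K) ≤ U := by
  obtain ⟨S, hS⟩ := exists_conj_apply_one_zero_ne_zero h2 htr hA0
  have hE := hU.upper_mem_of_apply_one_zero_ne_zero h2 (hU A hA S) hS
  exact fun B hB ↦ mem_of_trace_eq_zero hE (hU.lower_mem_of_upper_mem hE)
    (hU.diag_mem_of_upper_mem hE) hB

end IsConjInvariantSL2

end Submodule

/-- Let `p` be an odd prime and let `V = {A ∈ M₂(𝔽_p) : tr(A) = 0}` be the `𝔽_p`-vector space of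
trace-zero `2×2` matrices over `𝔽_p`.  If `U ⊆ V` is an `𝔽_p`-linear subspace such that
`S·A·S⁻¹ ∈ U` for every `A ∈ U` and every `S ∈ SL₂(𝔽_p)`, then `U = {0}` or `U = V`. -/
theorem statement11 (p : ℕ) [Fact p.Prime] (hodd : p ≠ 2)
    (U : Submodule (ZMod p) (Matrix (Fin 2) (Fin 2) (ZMod p)))
    (hUV : U ≤ LinearMap.ker (Matrix.traceLinearMap (Fin 2) (ZMod p) (ZMod p)))
    (hinv : ∀ A ∈ U, ∀ S : Matrix.SpecialLinearGroup (Fin 2) (ZMod p),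
      (S : Matrix (Fin 2) (Fin 2) (ZMod p)) * A *
        ((S⁻¹ : Matrix.SpecialLinearGroup (Fin 2) (ZMod p)) : Matrix (Fin 2) (Fin 2) (ZMod p))
        ∈ U) :
    U = ⊥ ∨ U = LinearMap.ker (Matrix.traceLinearMap (Fin 2) (ZMod p) (ZMod p)) := by
  refine or_iff_not_imp_left.mpr fun hU ↦ le_antisymm hUV ?_
  obtain ⟨A, hA, hA0⟩ := U.exists_mem_ne_zero_of_ne_bot hU
  have h2 : (2 : ZMod p) ≠ 0 := Ring.two_ne_zero (by rwa [ZMod.ringChar_zmod_n])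
  exact Submodule.IsConjInvariantSL2.ker_trace_le hinv h2 hA (hUV hA) hA0
end

section
/- Let p ≥ 5 be a prime, let G be a group, let φ : G → GL₂(𝔽_p) be a surjective group homomorphism, and let N be a normal subgroup of G such that the quotient group G/N has finite exponent coprime to p. Then the image φ(N) contains SL₂(𝔽_p). -/
open scoped MatrixGroups

/-!
Every element of `G` raised to `e = exp (G ⧸ N)` lies in `N`, so by surjectivity the subgroup
`φ(N)` contains every `e`-th power of `GL₂(𝔽_p)`. Since `p ∤ e`, the integer `e` is invertible in
`𝔽_p`, and each transvection `1 + c E_{ij}` is the `e`-th power of `1 + (c / e) E_{ij}`. The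
transvections generate `SL₂(𝔽_p)`.
-/

theorem Subgroup.pow_exponent_quotient_mem {G : Type*} [Group G] (N : Subgroup G) [N.Normal]
    (g : G) : g ^ Monoid.exponent (G ⧸ N) ∈ N := by
  rw [← QuotientGroup.eq_one_iff, QuotientGroup.mk_pow]
  exact Monoid.pow_exponent_eq_one _

namespace Matrix

namespace SpecialLinearGroup

variable {ι F : Type*} [DecidableEq ι] [Fintype ι]

lemma transvection_pow [CommRing F] {i j : ι} (hij : i ≠ j) (b : F) (n : ℕ) :
    transvection hij b ^ n = transvection hij (n * b) := by
  induction n with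
  | zero => simp
  | succ n ih => rw [pow_succ, ih, ← transvection_add, Nat.cast_succ, add_one_mul]

lemma transvection_mem_of_forall_pow_mem [Field F] {H : Subgroup (SpecialLinearGroup ι F)}
    {n : ℕ} (hn : (n : F) ≠ 0) (hH : ∀ g, g ^ n ∈ H) {i j : ι} (hij : i ≠ j) (c : F) :
    transvection hij c ∈ H := by
  have hc : transvection hij c = transvection hij (c / n) ^ n := by
    rw [transvection_pow, mul_div_cancel₀ c hn]
  exact hc ▸ hH _

end SpecialLinearGroup

lemma SL2.mem_of_forall_pow_mem {F : Type*} [Field F] {H : Subgroup SL(2, F)} {n : ℕ}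
    (hn : (n : F) ≠ 0) (hH : ∀ g, g ^ n ∈ H) (A : SL(2, F)) : A ∈ H :=
  SL2.transvection_induction (· ∈ H)
    (fun _ _ hij ↦ SpecialLinearGroup.transvection_mem_of_forall_pow_mem hn hH hij)
    (fun _ _ ↦ H.mul_mem) A

end Matrix

theorem statement13_general (p : ℕ) [Fact p.Prime] (G : Type*) [Group G]
    (φ : G →* GL (Fin 2) (ZMod p)) (hφ : Function.Surjective φ)
    (N : Subgroup G) [N.Normal]
    (hcop : Nat.Coprime (Monoid.exponent (G ⧸ N)) p) :
    ∀ A : Matrix.SpecialLinearGroup (Fin 2) (ZMod p),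
      Matrix.SpecialLinearGroup.toGL A ∈ Subgroup.map φ N := by
  have hpow (g : GL (Fin 2) (ZMod p)) : g ^ Monoid.exponent (G ⧸ N) ∈ N.map φ := by
    obtain ⟨x, rfl⟩ := hφ g
    exact ⟨_, N.pow_exponent_quotient_mem x, map_pow φ x _⟩
  have hunit : (Monoid.exponent (G ⧸ N) : ZMod p) ≠ 0 :=
    ((ZMod.isUnit_iff_coprime _ _).2 hcop).ne_zero
  exact Matrix.SL2.mem_of_forall_pow_mem (H := (N.map φ).comap Matrix.SpecialLinearGroup.toGL)
    hunit fun g ↦ by simpa only [Subgroup.mem_comap, map_pow] using hpow _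

/-- Let `p ≥ 5` be a prime, let `G` be a group, let `φ : G → GL₂(𝔽_p)` be a surjective group
homomorphism, and let `N` be a normal subgroup of `G` such that the quotient group `G/N` has
finite exponent coprime to `p`.  Then the image `φ(N)` contains `SL₂(𝔽_p)`. -/
theorem statement13 (p : ℕ) [Fact p.Prime] (hp5 : 5 ≤ p) (G : Type*) [Group G]
    (φ : G →* GL (Fin 2) (ZMod p)) (hφ : Function.Surjective φ)
    (N : Subgroup G) [N.Normal]
    (hexp : Monoid.exponent (G ⧸ N) ≠ 0)
    (hcop : Nat.Coprime (Monoid.exponent (G ⧸ N)) p) :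
    ∀ A : Matrix.SpecialLinearGroup (Fin 2) (ZMod p),
      Matrix.SpecialLinearGroup.toGL A ∈ Subgroup.map φ N :=
  statement13_general p G φ hφ N hcop
end
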